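/- arXiv:1811.06189 — 2 statements merged into one kernel-verified Lean document; each statement's English description precedes it below -/
import Mathlib

section
/- Let A ⊆ ℝ be an open set and let Γ be a move semigroup with dom(Γ) ⊆ A and im(Γ) ⊆ A. Then joinextend_A(Γ) is a move semigroup that satisfies axiom (extend_A). -/
open Filter Set

noncomputable section

/-- The unrestricted translation (`b = false`) or reflection (`b = true`)
with parameter `p`: `x ↦ x + p`, resp. `x ↦ p - x`. -/
def uEval (b : Bool) (p : ℝ) (x : ℝ) : ℝ := if b then p - x else x + p

/-- A restricted move `γ|_D`: a translation (`isRefl = false`) or a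
reflection (`isRefl = true`) together with a domain. -/
structure Move where
  isRefl : Bool
  param : ℝ
  dom : Set ℝ

namespace Move

def eval (m : Move) : ℝ → ℝ := uEval m.isRefl m.param

/-- The character: `+1` for translations, `-1` for reflections. -/
def chi (m : Move) : ℝ := if m.isRefl then -1 else 1

def image (m : Move) : Set ℝ := m.eval '' m.dom

def graph (m : Move) : Set (ℝ × ℝ) := (fun x => (x, m.eval x)) '' m.dom

/-- Domains of moves must be open intervals or empty. -/
def ValidDom (D : Set ℝ) : Prop := IsOpen D ∧ D.OrdConnected

/-- A valid move: open-interval-or-empty domain; moves with empty domain are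
normalized (`param = 0`), so that there are exactly two empty moves, one of
each character. -/
def Valid (m : Move) : Prop := ValidDom m.dom ∧ (m.dom = ∅ → m.param = 0)

/-- The move `γ|_D` (normalized representative). -/
def mk' (b : Bool) (p : ℝ) (D : Set ℝ) : Move :=
  letI : Decidable (D = ∅) := Classical.dec _
  ⟨b, if D = ∅ then 0 else p, D⟩

/-- Composition of moves: `γ₂|_{D₂} ∘ γ₁|_{D₁} = (γ₂ ∘ γ₁)|_{D₁ ∩ γ₁⁻¹ D₂}`. -/
def comp (m2 m1 : Move) : Move :=
  mk' (m2.isRefl != m1.isRefl)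
    (if m2.isRefl then m2.param - m1.param else m1.param + m2.param)
    (m1.dom ∩ m1.eval ⁻¹' m2.dom)

/-- Inverse of a move: `(γ|_D)⁻¹ = γ⁻¹|_{γ(D)}`. -/
def inv (m : Move) : Move :=
  mk' m.isRefl (if m.isRefl then m.param else -m.param) (m.eval '' m.dom)

/-- The restriction partial order: `m1` is a restriction of `m2`. -/
def le (m1 m2 : Move) : Prop :=
  m1.isRefl = m2.isRefl ∧ m1.dom ⊆ m2.dom ∧ ∀ x ∈ m1.dom, m1.eval x = m2.eval x

end Move

/-- A move ensemble: a set of (valid) moves. -/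
def IsMoveEnsemble (Ω : Set Move) : Prop := ∀ m ∈ Ω, m.Valid

/-- A move semigroup: a move ensemble closed under composition and inverse. -/
def IsMoveSemigroup (Γ : Set Move) : Prop :=
  IsMoveEnsemble Γ ∧ (∀ m1 ∈ Γ, ∀ m2 ∈ Γ, Move.comp m2 m1 ∈ Γ) ∧
    (∀ m ∈ Γ, Move.inv m ∈ Γ)

/-- `⟨Ω⟩`: the smallest move semigroup containing `Ω`. -/
def semi (Ω : Set Move) : Set Move := ⋂₀ {Γ | IsMoveSemigroup Γ ∧ Ω ⊆ Γ}

/-- Axiom (restrict). -/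
def RestrictClosed (Ω : Set Move) : Prop :=
  ∀ m ∈ Ω, ∀ D' : Set ℝ, D' ⊆ m.dom → Move.ValidDom D' →
    Move.mk' m.isRefl m.param D' ∈ Ω

/-- The restriction closure of an ensemble. -/
def restrictCl (Ω : Set Move) : Set Move := ⋂₀ {Γ | RestrictClosed Γ ∧ Ω ⊆ Γ}

/-- Join-closed: restriction-closed and closed under continuation (joins). -/
def JoinClosed (Ω : Set Move) : Prop :=
  RestrictClosed Ω ∧
    ∀ (b : Bool) (p : ℝ) (J : Set (Set ℝ)), J.Nonempty →
      (∀ I ∈ J, Move.mk' b p I ∈ Ω) → (⋃₀ J).OrdConnected →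
      Move.mk' b p (⋃₀ J) ∈ Ω

/-- `join(Ω)`: the smallest join-closed ensemble containing `Ω`. -/
def joinCl (Ω : Set Move) : Set Move := ⋂₀ {Γ | JoinClosed Γ ∧ Ω ⊆ Γ}

/-- `joinsemi(Ω) = join(⟨Ω⟩)`: the joined move semigroup generated by `Ω`. -/
def joinsemi (Ω : Set Move) : Set Move := joinCl (semi Ω)

/-- `θ` respects the move `γ|_D`: `θ(γ(x)) = χ(γ)·θ(x) + c` on `D`. -/
def Respects (θ : ℝ → ℝ) (m : Move) : Prop :=
  ∃ c : ℝ, ∀ x ∈ m.dom, θ (m.eval x) = m.chi * θ x + c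

/-- `θ` respects each move of the ensemble `Ω`. -/
def RespectsAll (θ : ℝ → ℝ) (Ω : Set Move) : Prop := ∀ m ∈ Ω, Respects θ m

/-- All translation moves with graph contained in `O`. -/
def tMoves (O : Set (ℝ × ℝ)) : Set Move :=
  {m | m.isRefl = false ∧ m.Valid ∧ m.graph ⊆ O}

/-- All reflection moves with graph contained in `O`. -/
def rMoves (O : Set (ℝ × ℝ)) : Set Move :=
  {m | m.isRefl = true ∧ m.Valid ∧ m.graph ⊆ O}

/-- All moves with graph contained in `O`. -/
def movesIn (O : Set (ℝ × ℝ)) : Set Move := {m | m.Valid ∧ m.graph ⊆ O}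

/-- Translation moves graph of an ensemble. -/
def grPlus (Ω : Set Move) : Set (ℝ × ℝ) :=
  {q | ∃ m ∈ Ω, m.isRefl = false ∧ q ∈ m.graph}

/-- Reflection moves graph of an ensemble. -/
def grMinus (Ω : Set Move) : Set (ℝ × ℝ) :=
  {q | ∃ m ∈ Ω, m.isRefl = true ∧ q ∈ m.graph}

/-- `dom(O)`: union of the domains of the moves in `movesIn O`. -/
def domOf (O : Set (ℝ × ℝ)) : Set ℝ := {x | ∃ m ∈ movesIn O, x ∈ m.dom}

/-- `im(O)`: union of the images of the moves in `movesIn O`. -/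
def imOf (O : Set (ℝ × ℝ)) : Set ℝ := {x | ∃ m ∈ movesIn O, x ∈ m.image}

/-- domain of a move ensemble. -/
def domEns (Ω : Set Move) : Set ℝ := {x | ∃ m ∈ Ω, x ∈ m.dom}

/-- image of a move ensemble. -/
def imEns (Ω : Set Move) : Set ℝ := {x | ∃ m ∈ Ω, x ∈ m.image}

/-- Convergence of a sequence of unrestricted moves (character, parameter):
all but finitely many have character `b`, and the parameters tend to `p`. -/
def ConvergesTo (γ : ℕ → Bool × ℝ) (b : Bool) (p : ℝ) : Prop :=
  (∀ᶠ i in atTop, (γ i).1 = b) ∧ Tendsto (fun i => (γ i).2) atTop (nhds p)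

/-- Axiom (lim): fixed-domain limits of moves. -/
def LimClosed (Ω : Set Move) : Prop :=
  ∀ D : Set ℝ, Move.ValidDom D →
    ∀ (γ : ℕ → Bool × ℝ) (b : Bool) (p : ℝ), ConvergesTo γ b p →
      (∀ i, Move.mk' (γ i).1 (γ i).2 D ∈ Ω) → Move.mk' b p D ∈ Ω

/-- `lim(Ω)`: the smallest superset of `Ω` satisfying (lim). -/
def limCl (Ω : Set Move) : Set Move := ⋂₀ {Γ | LimClosed Γ ∧ Ω ⊆ Γ}

/-- Axiom (arblim): limits of moves with converging domains. -/
def ArbLimClosed (Ω : Set Move) : Prop :=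
  ∀ (γ : ℕ → Bool × ℝ) (b : Bool) (p : ℝ) (l u : ℕ → ℝ) (l₀ u₀ : ℝ),
    ConvergesTo γ b p → Tendsto l atTop (nhds l₀) → Tendsto u atTop (nhds u₀) →
    (∀ i, Move.mk' (γ i).1 (γ i).2 (Set.Ioo (l i) (u i)) ∈ Ω) →
    Move.mk' b p (Set.Ioo l₀ u₀) ∈ Ω

/-- `arblim(Ω)`: the smallest superset of `Ω` satisfying (arblim). -/
def arblimCl (Ω : Set Move) : Set Move := ⋂₀ {Γ | ArbLimClosed Γ ∧ Ω ⊆ Γ}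

/-- Axiom (kaleido). -/
def Kaleidoscopic (Ω : Set Move) : Prop :=
  ∀ D I : Set ℝ, Move.ValidDom D → Move.ValidDom I →
    (tMoves (D ×ˢ I) ⊆ Ω ↔ rMoves (D ×ˢ I) ⊆ Ω)

/-- Axiom (extend_A): continuous domain extension relative to the open set `A`. -/
def ExtendClosed (A : Set ℝ) (Ω : Set Move) : Prop :=
  ∀ (b : Bool) (p : ℝ) (J : Set (Set ℝ)) (D : Set ℝ), J.Nonempty →
    (∀ I ∈ J, Move.mk' b p I ∈ Ω) → Move.ValidDom D →
    D ⊆ closure (⋃₀ J) ∩ A ∩ uEval b p ⁻¹' A →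
    Move.mk' b p D ∈ Ω

/-- `joinextend_A(Ω)`: the smallest superset of `Ω` satisfying (extend_A). -/
def joinExtendCl (A : Set ℝ) (Ω : Set Move) : Set Move :=
  ⋂₀ {Γ | ExtendClosed A Γ ∧ Ω ⊆ Γ}

/-- A closed move semigroup with respect to the open set `A`. -/
def ClosedMoveSemigroup (A : Set ℝ) (Γ : Set Move) : Prop :=
  IsMoveSemigroup Γ ∧ JoinClosed Γ ∧ Kaleidoscopic Γ ∧ LimClosed Γ ∧
    ExtendClosed A Γ

/-- The moves closure `ctscl(Ω)`: the smallest closed move semigroup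
(with respect to `A`) containing `Ω`. -/
def ctscl (A : Set ℝ) (Ω : Set Move) : Set Move :=
  ⋂₀ {Γ | ClosedMoveSemigroup A Γ ∧ Ω ⊆ Γ}

/-- The set of maximal elements of `Ω` in the restriction partial order. -/
def MaxOf (Ω : Set Move) : Set Move :=
  {m ∈ Ω | ∀ m' ∈ Ω, Move.le m m' → Move.le m' m}

/-! Translations and reflections are homeomorphisms of `ℝ`, so they commute with closures, and
for `U` open every point of `U ∩ closure S` lies in `closure (U ∩ S)`. Hence inverting a move, or
composing it on either side with a fixed move whose domain is an open interval and whose domain and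
image lie in `A`, turns the hypotheses of (extend_A) into hypotheses of (extend_A): the preimage of
an (extend_A)-closed ensemble under each of these operations is again (extend_A)-closed. As
`dom(Γ), im(Γ) ⊆ A`, every move of `joinextend_A(Γ)` qualifies as such a fixed move, and minimality
of `joinextend_A(Γ)` propagates closure under inverse from `Γ`, and closure under composition in two
steps: first for `m₂ ∘ m₁` with `m₂ ∈ Γ`, then in general. -/

lemma uEval_uEval (b₂ b₁ : Bool) (p₂ p₁ x : ℝ) :
    uEval b₂ p₂ (uEval b₁ p₁ x) = uEval (b₂ != b₁) (if b₂ then p₂ - p₁ else p₁ + p₂) x := by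
  cases b₂ <;> cases b₁ <;> simp [uEval] <;> ring

lemma uEval_inv_uEval (b : Bool) (p x : ℝ) : uEval b (if b then p else -p) (uEval b p x) = x := by
  cases b <;> simp [uEval]

lemma continuous_uEval (b : Bool) (p : ℝ) : Continuous (uEval b p) := by
  cases b
  · exact continuous_add_const p
  · exact continuous_sub_left p

def uEvalHomeomorph (b : Bool) (p : ℝ) : ℝ ≃ₜ ℝ where
  toFun := uEval b p
  invFun := uEval b (if b then p else -p)
  left_inv := uEval_inv_uEval b p
  right_inv x := by cases b <;> simp [uEval]
  continuous_toFun := continuous_uEval b p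
  continuous_invFun := continuous_uEval b _

@[simp]
lemma coe_uEvalHomeomorph (b : Bool) (p : ℝ) : ⇑(uEvalHomeomorph b p) = uEval b p := rfl

lemma image_uEval_eq_preimage (b : Bool) (p : ℝ) (S : Set ℝ) :
    uEval b p '' S = uEval b (if b then p else -p) ⁻¹' S :=
  (uEvalHomeomorph b p).toEquiv.image_eq_preimage_symm S

namespace Move

lemma ValidDom.inter {S T : Set ℝ} (hS : ValidDom S) (hT : ValidDom T) : ValidDom (S ∩ T) :=
  ⟨hS.1.inter hT.1, hS.2.inter hT.2⟩

lemma ValidDom.preimage_uEval {S : Set ℝ} (hS : ValidDom S) (b : Bool) (p : ℝ) :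
    ValidDom (uEval b p ⁻¹' S) := by
  refine ⟨hS.1.preimage (uEvalHomeomorph b p).continuous, ?_⟩
  cases b
  · exact hS.2.preimage_mono fun _ _ hxy => add_le_add_left hxy p
  · exact hS.2.preimage_anti fun _ _ hxy => sub_le_sub_left hxy p

lemma ValidDom.image_uEval {S : Set ℝ} (hS : ValidDom S) (b : Bool) (p : ℝ) :
    ValidDom (uEval b p '' S) := by
  rw [image_uEval_eq_preimage]
  exact hS.preimage_uEval _ _

lemma mk'_of_ne_empty (b : Bool) (p : ℝ) {D : Set ℝ} (h : D ≠ ∅) : mk' b p D = ⟨b, p, D⟩ := by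
  simp [mk', h]

lemma valid_mk' (b : Bool) (p : ℝ) {D : Set ℝ} (hD : ValidDom D) : (mk' b p D).Valid :=
  ⟨hD, fun h => by simp only [mk'] at h ⊢; simp [h]⟩

lemma image_mk' (b : Bool) (p : ℝ) (D : Set ℝ) : (mk' b p D).image = uEval b p '' D := by
  rcases eq_or_ne D ∅ with rfl | h
  · simp [image, mk']
  · rw [mk'_of_ne_empty b p h]; rfl

lemma comp_mk' (m : Move) (b : Bool) (p : ℝ) (D : Set ℝ) :
    comp m (mk' b p D) = mk' (m.isRefl != b)
      (if m.isRefl then m.param - p else p + m.param) (D ∩ uEval b p ⁻¹' m.dom) := by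
  rcases eq_or_ne D ∅ with rfl | h
  · simp [comp, mk']
  · rw [mk'_of_ne_empty b p h]; rfl

lemma mk'_comp (b : Bool) (p : ℝ) (D : Set ℝ) (m : Move) :
    comp (mk' b p D) m = mk' (b != m.isRefl)
      (if b then p - m.param else m.param + p) (m.dom ∩ m.eval ⁻¹' D) := by
  rcases eq_or_ne D ∅ with rfl | h
  · simp [comp, mk']
  · rw [mk'_of_ne_empty b p h]; rfl

lemma inv_mk' (b : Bool) (p : ℝ) (D : Set ℝ) :
    inv (mk' b p D) = mk' b (if b then p else -p) (uEval b p '' D) := by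
  rcases eq_or_ne D ∅ with rfl | h
  · simp [inv, mk']
  · rw [mk'_of_ne_empty b p h]; rfl

end Move

open Move

def validMovesOn (A : Set ℝ) : Set Move := {m | m.Valid ∧ m.dom ⊆ A ∧ m.image ⊆ A}

section ExtendClosed

variable {A : Set ℝ} {Ω : Set Move}

lemma extendClosed_validMovesOn (A : Set ℝ) : ExtendClosed A (validMovesOn A) := by
  intro b p J D _ _ hD hsub
  refine ⟨valid_mk' b p hD, fun x hx => (hsub hx).1.2, ?_⟩
  rw [image_mk']
  rintro _ ⟨x, hx, rfl⟩
  exact (hsub hx).2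

lemma ExtendClosed.preimage_inv (hΩ : ExtendClosed A Ω) : ExtendClosed A (inv ⁻¹' Ω) := by
  intro b p J D hJ hmem hD hsub
  have hmem' : ∀ I ∈ image (uEval b p) '' J, mk' b (if b then p else -p) I ∈ Ω := by
    rintro _ ⟨I, hI, rfl⟩
    simpa only [mem_preimage, inv_mk'] using hmem I hI
  rw [mem_preimage, inv_mk']
  refine hΩ _ _ _ _ (hJ.image _) hmem' (hD.image_uEval b p) ?_
  rintro _ ⟨x, hx, rfl⟩
  obtain ⟨⟨hxJ, hxA⟩, hγxA⟩ := hsub hx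
  refine ⟨⟨?_, hγxA⟩, ?_⟩
  · rw [← image_sUnion, ← coe_uEvalHomeomorph, ← Homeomorph.image_closure]
    exact mem_image_of_mem _ hxJ
  · rwa [mem_preimage, uEval_inv_uEval]

lemma ExtendClosed.preimage_comp_left (hΩ : ExtendClosed A Ω) {m : Move} (hm : ValidDom m.dom)
    (him : m.image ⊆ A) : ExtendClosed A (comp m ⁻¹' Ω) := by
  intro b p J D hJ hmem hD hsub
  have hmem' : ∀ I ∈ (· ∩ uEval b p ⁻¹' m.dom) '' J, mk' (m.isRefl != b)
      (if m.isRefl then m.param - p else p + m.param) I ∈ Ω := by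
    rintro _ ⟨I, hI, rfl⟩
    simpa only [mem_preimage, comp_mk'] using hmem I hI
  rw [mem_preimage, comp_mk']
  refine hΩ _ _ _ _ (hJ.image _) hmem' (hD.inter (hm.preimage_uEval b p)) ?_
  rintro x ⟨hxD, hxm⟩
  obtain ⟨⟨hxJ, hxA⟩, -⟩ := hsub hxD
  refine ⟨⟨?_, hxA⟩, ?_⟩
  · rw [sUnion_image, ← iUnion₂_inter, ← sUnion_eq_biUnion, inter_comm]
    exact (hm.1.preimage (uEvalHomeomorph b p).continuous).inter_closure ⟨hxm, hxJ⟩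
  · rw [mem_preimage, ← uEval_uEval]
    exact him ⟨_, hxm, rfl⟩

lemma ExtendClosed.preimage_comp_right (hΩ : ExtendClosed A Ω) {m : Move}
    (hm : ValidDom m.dom) (hdom : m.dom ⊆ A) : ExtendClosed A ((comp · m) ⁻¹' Ω) := by
  intro b p J D hJ hmem hD hsub
  have hmem' : ∀ I ∈ (fun I => m.dom ∩ m.eval ⁻¹' I) '' J, mk' (b != m.isRefl)
      (if b then p - m.param else m.param + p) I ∈ Ω := by
    rintro _ ⟨I, hI, rfl⟩
    simpa only [mem_preimage, mk'_comp] using hmem I hI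
  rw [mem_preimage, mk'_comp]
  refine hΩ _ _ _ _ (hJ.image _) hmem' (hm.inter (hD.preimage_uEval _ _)) ?_
  rintro x ⟨hxm, hxD⟩
  obtain ⟨⟨hxJ, -⟩, hγxA⟩ := hsub hxD
  refine ⟨⟨?_, hdom hxm⟩, ?_⟩
  · rw [sUnion_image, ← inter_iUnion₂, ← preimage_iUnion₂, ← sUnion_eq_biUnion]
    refine hm.1.inter_closure ⟨hxm, ?_⟩
    rwa [eval, ← coe_uEvalHomeomorph, ← Homeomorph.preimage_closure]
  · rwa [mem_preimage, ← uEval_uEval]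

end ExtendClosed

section joinExtendCl

variable {A : Set ℝ} {Γ Ω : Set Move}

lemma extendClosed_joinExtendCl (A : Set ℝ) (Γ : Set Move) :
    ExtendClosed A (joinExtendCl A Γ) :=
  fun b p J D hJ hmem hD hsub _ hΩ =>
    hΩ.1 b p J D hJ (fun I hI => hmem I hI _ hΩ) hD hsub

lemma subset_joinExtendCl (A : Set ℝ) (Γ : Set Move) : Γ ⊆ joinExtendCl A Γ :=
  fun _ hm _ hΩ => hΩ.2 hm

lemma joinExtendCl_subset (hΩ : ExtendClosed A Ω) (hΓΩ : Γ ⊆ Ω) : joinExtendCl A Γ ⊆ Ω :=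
  fun _ hm => hm Ω ⟨hΩ, hΓΩ⟩

lemma joinExtendCl_subset_validMovesOn (hΓ : IsMoveEnsemble Γ) (hdom : domEns Γ ⊆ A)
    (him : imEns Γ ⊆ A) : joinExtendCl A Γ ⊆ validMovesOn A :=
  joinExtendCl_subset (extendClosed_validMovesOn A)
    fun m hm => ⟨hΓ m hm, fun _ hx => hdom ⟨m, hm, hx⟩, fun _ hx => him ⟨m, hm, hx⟩⟩

end joinExtendCl

theorem joinExtendCl_isMoveSemigroup_general (A : Set ℝ)
    (Γ : Set Move) (hΓ : IsMoveSemigroup Γ)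
    (hdom : domEns Γ ⊆ A) (him : imEns Γ ⊆ A) :
    IsMoveSemigroup (joinExtendCl A Γ) ∧ ExtendClosed A (joinExtendCl A Γ) := by
  set P := joinExtendCl A Γ
  have hP : ExtendClosed A P := extendClosed_joinExtendCl A Γ
  have hΓP : Γ ⊆ P := subset_joinExtendCl A Γ
  have hvalid : P ⊆ validMovesOn A := joinExtendCl_subset_validMovesOn hΓ.1 hdom him
  have hinv : ∀ m ∈ P, inv m ∈ P :=
    joinExtendCl_subset hP.preimage_inv fun m hm => hΓP (hΓ.2.2 m hm)
  have hcompΓ : ∀ m₂ ∈ Γ, ∀ m₁ ∈ P, comp m₂ m₁ ∈ P := fun m₂ hm₂ =>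
    have hm₂P := hvalid (hΓP hm₂)
    joinExtendCl_subset (hP.preimage_comp_left hm₂P.1.1 hm₂P.2.2)
      fun m₁ hm₁ => hΓP (hΓ.2.1 m₁ hm₁ m₂ hm₂)
  have hcomp : ∀ m₁ ∈ P, ∀ m₂ ∈ P, comp m₂ m₁ ∈ P := fun m₁ hm₁ =>
    have hm₁A := hvalid hm₁
    joinExtendCl_subset (hP.preimage_comp_right hm₁A.1.1 hm₁A.2.1)
      fun m₂ hm₂ => hcompΓ m₂ hm₂ m₁ hm₁
  exact ⟨⟨fun m hm => (hvalid hm).1, hcomp, hinv⟩, hP⟩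

/-- The extension closure of a move semigroup with domain and image in the
open set `A` is a move semigroup satisfying (extend_A). -/
theorem joinExtendCl_isMoveSemigroup (A : Set ℝ) (hA : IsOpen A)
    (Γ : Set Move) (hΓ : IsMoveSemigroup Γ)
    (hdom : domEns Γ ⊆ A) (him : imEns Γ ⊆ A) :
    IsMoveSemigroup (joinExtendCl A Γ) ∧ ExtendClosed A (joinExtendCl A Γ) :=
  joinExtendCl_isMoveSemigroup_general A Γ hΓ hdom him
end
end

section
/- A join-closed move ensemble Ω^∨ is equal to the restriction closure of its set Max(Ω^∨) of maximal elements in the restriction partial order, and also equal to the joined ensemble of Max(Ω^∨): Ω^∨ = restrict(Max(Ω^∨)) = join(Max(Ω^∨)). -/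
open Filter Set

noncomputable section

/-!
Every move of a join-closed ensemble `Ω` lies below a maximal one. For `γ|_D ∈ Ω` with `D`
nonempty, the domains `I ⊇ D` with `γ|_I ∈ Ω` all contain a common point, so their union is an
interval and `γ` restricted to it lies in `Ω` by joining; any move of `Ω` above it is a restriction
of `γ` whose domain is one of these `I`, so it is maximal. An empty move lies below any move of its
character, and is itself maximal if `Ω` has no nonempty move of that character. Hence
`Ω ⊆ restrict(Max Ω) ⊆ join(Max Ω) ⊆ Ω`.
-/

lemma param_eq_of_uEval_eq {b : Bool} {p q x : ℝ} (h : uEval b p x = uEval b q x) : p = q := by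
  cases b <;> simp only [uEval, Bool.false_eq_true, if_true, if_false] at h <;> linarith

namespace Move

lemma mk'_of_nonempty (b : Bool) (p : ℝ) {D : Set ℝ} (hD : D.Nonempty) :
    mk' b p D = ⟨b, p, D⟩ := by
  simp [mk', hD.ne_empty]

lemma Valid.mk'_eq {m : Move} (hm : m.Valid) : mk' m.isRefl m.param m.dom = m := by
  obtain ⟨b, p, D⟩ := m
  by_cases hD : D = ∅
  · subst hD
    simpa [mk'] using (hm.2 rfl).symm
  · exact mk'_of_nonempty b p (nonempty_iff_ne_empty.mpr hD)

lemma le_of_dom_eq_empty {m M : Move} (hm : m.dom = ∅) (hr : m.isRefl = M.isRefl) : le m M :=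
  ⟨hr, by simp [hm], by simp [hm]⟩

lemma le_iff_of_nonempty {m M : Move} (hm : m.dom.Nonempty) :
    le m M ↔ m.isRefl = M.isRefl ∧ m.param = M.param ∧ m.dom ⊆ M.dom := by
  constructor
  · rintro ⟨hr, hsub, heval⟩
    obtain ⟨x, hx⟩ := hm
    have h := heval x hx
    rw [eval, eval, hr] at h
    exact ⟨hr, param_eq_of_uEval_eq h, hsub⟩
  · rintro ⟨hr, hp, hsub⟩
    exact ⟨hr, hsub, fun x _ => by rw [eval, eval, hr, hp]⟩

lemma Valid.mk'_eq_of_le {m M : Move} (hm : m.Valid) (hle : le m M) :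
    mk' M.isRefl M.param m.dom = m := by
  by_cases hD : m.dom = ∅
  · rw [← hm.mk'_eq, hD, hle.1]
    simp [mk']
  · obtain ⟨hr, hp, -⟩ := (le_iff_of_nonempty (nonempty_iff_ne_empty.mpr hD)).mp hle
    rw [← hr, ← hp, hm.mk'_eq]

end Move

lemma RestrictClosed.mem_of_le {S : Set Move} (hS : RestrictClosed S) {m M : Move}
    (hM : M ∈ S) (hm : m.Valid) (hle : Move.le m M) : m ∈ S := by
  simpa only [hm.mk'_eq_of_le hle] using hS M hM m.dom hle.2.1 hm.1

lemma subset_restrictCl (Ω : Set Move) : Ω ⊆ restrictCl Ω :=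
  fun _ hm _ hΓ => hΓ.2 hm

lemma restrictCl_subset {Ω Γ : Set Move} (hΓ : RestrictClosed Γ) (h : Ω ⊆ Γ) :
    restrictCl Ω ⊆ Γ :=
  sInter_subset_of_mem ⟨hΓ, h⟩

lemma restrictClosed_restrictCl (Ω : Set Move) : RestrictClosed (restrictCl Ω) :=
  fun m hm D hD hvalid Γ hΓ => hΓ.1 m (hm Γ hΓ) D hD hvalid

lemma subset_joinCl (Ω : Set Move) : Ω ⊆ joinCl Ω :=
  fun _ hm _ hΓ => hΓ.2 hm

lemma joinCl_subset {Ω Γ : Set Move} (hΓ : JoinClosed Γ) (h : Ω ⊆ Γ) : joinCl Ω ⊆ Γ :=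
  sInter_subset_of_mem ⟨hΓ, h⟩

lemma joinClosed_joinCl (Ω : Set Move) : JoinClosed (joinCl Ω) :=
  ⟨fun m hm D hD hvalid Γ hΓ => hΓ.1.1 m (hm Γ hΓ) D hD hvalid,
    fun b p J hJ hmem hconn Γ hΓ => hΓ.1.2 b p J hJ (fun I hI => hmem I hI Γ hΓ) hconn⟩

namespace JoinClosed

variable {Ω : Set Move}

lemma exists_maxOf_le_of_nonempty (hΩ : IsMoveEnsemble Ω) (hjoin : JoinClosed Ω) {m : Move}
    (hm : m ∈ Ω) (hne : m.dom.Nonempty) : ∃ M ∈ MaxOf Ω, Move.le m M := by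
  obtain ⟨x, hx⟩ := hne
  set J : Set (Set ℝ) := {I | Move.mk' m.isRefl m.param I ∈ Ω ∧ m.dom ⊆ I}
  have hmJ : m.dom ∈ J := ⟨by rw [(hΩ m hm).mk'_eq]; exact hm, subset_rfl⟩
  have hU : (⋃₀ J).Nonempty := ⟨x, m.dom, hmJ, hx⟩
  have hconn : (⋃₀ J).OrdConnected :=
    (isPreconnected_sUnion x J (fun I hI => hI.2 hx)
      (fun I hI => (hΩ _ hI.1).1.2.isPreconnected)).ordConnected
  have hMΩ := hjoin.2 m.isRefl m.param J ⟨m.dom, hmJ⟩ (fun I hI => hI.1) hconn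
  rw [Move.mk'_of_nonempty _ _ hU] at hMΩ
  have hmM : m.dom ⊆ ⋃₀ J := subset_sUnion_of_mem hmJ
  refine ⟨_, ⟨hMΩ, fun m' hm' hle => ?_⟩, (Move.le_iff_of_nonempty ⟨x, hx⟩).mpr ⟨rfl, rfl, hmM⟩⟩
  obtain ⟨hr, hp, hsub⟩ := (Move.le_iff_of_nonempty hU).mp hle
  have hm'J : m'.dom ∈ J := ⟨by rw [hr, hp, (hΩ m' hm').mk'_eq]; exact hm', hmM.trans hsub⟩
  exact (Move.le_iff_of_nonempty (hU.mono hsub)).mpr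
    ⟨hr.symm, hp.symm, subset_sUnion_of_mem hm'J⟩

lemma exists_maxOf_le (hΩ : IsMoveEnsemble Ω) (hjoin : JoinClosed Ω) {m : Move} (hm : m ∈ Ω) :
    ∃ M ∈ MaxOf Ω, Move.le m M := by
  by_cases hne : m.dom.Nonempty
  · exact hjoin.exists_maxOf_le_of_nonempty hΩ hm hne
  rw [not_nonempty_iff_eq_empty] at hne
  by_cases hex : ∃ m₁ ∈ Ω, m₁.isRefl = m.isRefl ∧ m₁.dom.Nonempty
  · obtain ⟨m₁, hm₁, hr, hne₁⟩ := hex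
    obtain ⟨M, hM, hle⟩ := hjoin.exists_maxOf_le_of_nonempty hΩ hm₁ hne₁
    exact ⟨M, hM, Move.le_of_dom_eq_empty hne (hr ▸ hle.1)⟩
  · push Not at hex
    refine ⟨m, ⟨hm, fun m' hm' hle => ?_⟩, Move.le_of_dom_eq_empty hne rfl⟩
    exact Move.le_of_dom_eq_empty (hex m' hm' hle.1.symm) hle.1.symm

lemma subset_of_maxOf_subset (hΩ : IsMoveEnsemble Ω) (hjoin : JoinClosed Ω) {S : Set Move}
    (hS : RestrictClosed S) (h : MaxOf Ω ⊆ S) : Ω ⊆ S := fun m hm =>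
  let ⟨_, hM, hle⟩ := hjoin.exists_maxOf_le hΩ hm
  hS.mem_of_le (h hM) (hΩ m hm) hle

end JoinClosed

/-- A join-closed move ensemble is the restriction closure, and the joined
ensemble, of its set of maximal elements. -/
theorem joinClosed_presented_by_max (Ω : Set Move)
    (hΩ : IsMoveEnsemble Ω) (hjoin : JoinClosed Ω) :
    Ω = restrictCl (MaxOf Ω) ∧ Ω = joinCl (MaxOf Ω) := by
  have h₁ : Ω ⊆ restrictCl (MaxOf Ω) :=
    hjoin.subset_of_maxOf_subset hΩ (restrictClosed_restrictCl _) (subset_restrictCl _)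
  have h₂ : restrictCl (MaxOf Ω) ⊆ joinCl (MaxOf Ω) :=
    restrictCl_subset (joinClosed_joinCl _).1 (subset_joinCl _)
  have h₃ : joinCl (MaxOf Ω) ⊆ Ω := joinCl_subset hjoin fun _ hm => hm.1
  exact ⟨h₁.antisymm (h₂.trans h₃), (h₁.trans h₂).antisymm h₃⟩
end
end
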